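/- Let a ≤ b be real numbers and δ > 0. The function F_δ is σ-strongly convex on the box {μ ∈ ℝ^m : a ≤ μ_j ≤ b for all j} with modulus σ = exp(a); that is, for all μ, ν in the box and all t ∈ [0,1], F_δ(tμ + (1−t)ν) ≤ t·F_δ(μ) + (1−t)·F_δ(ν) − (σ/2)·t·(1−t)·‖μ − ν‖₂² (in the paper, a = μ̲ − η and b = μ̄ + η). -/

import Mathlib

open scoped Classical

noncomputable section

/-- Extended valuation vector of buyer `i`: index `0` gets value `1` (the convention
`v_{i0} = 1`), index `j+1` gets `v i j`. -/
def extV {n m : ℕ} (v : Fin n → Fin m → ℝ) (i : Fin n) : Fin (m + 1) → ℝ :=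
  Fin.cons 1 (v i)

/-- Extended log-price vector: index `0` gets `0` (the convention `μ₀ = 0`),
index `j+1` gets `μ j`. -/
def extMu {m : ℕ} (μ : Fin m → ℝ) : Fin (m + 1) → ℝ :=
  Fin.cons 0 μ

/-- The smoothed weight `exp((log v_{ij} − μ_j)/δ) = v_{ij}^{1/δ} · exp(−μ_j/δ)`,
with the conventions `log 0 = −∞`, `exp (−∞) = 0` (via `0 ^ (1/δ) = 0` for `δ > 0`). -/
def wt {n m : ℕ} (v : Fin n → Fin m → ℝ) (δ : ℝ) (μ : Fin m → ℝ) (i : Fin n)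
    (j : Fin (m + 1)) : ℝ :=
  extV v i j ^ (1 / δ) * Real.exp (-extMu μ j / δ)

/-- The smoothed objective `F_δ`. -/
def Fd {n m : ℕ} (B : Fin n → ℝ) (v : Fin n → Fin m → ℝ) (δ : ℝ) (μ : Fin m → ℝ) : ℝ :=
  (∑ j, Real.exp (μ j)) + δ * ∑ i, B i * Real.log (∑ j, wt v δ μ i j)

/-- The gradient of the smoothed objective `F_δ`. -/
def gradFd {n m : ℕ} (B : Fin n → ℝ) (v : Fin n → Fin m → ℝ) (δ : ℝ) (μ : Fin m → ℝ)
    (j : Fin m) : ℝ :=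
  Real.exp (μ j) - ∑ i, B i * (wt v δ μ i j.succ / ∑ j', wt v δ μ i j')

/-- The value `v_{ij} · exp(−μ_j)` (over extended indices), whose logarithm is
`log v_{ij} − μ_j` with the convention `log 0 = −∞`. -/
def valF {n m : ℕ} (v : Fin n → Fin m → ℝ) (μ : Fin m → ℝ) (i : Fin n) (j : Fin (m + 1)) : ℝ :=
  extV v i j * Real.exp (-extMu μ j)

/-- `h_i(μ) = max_{j ∈ {0,…,m}} (log v_{ij} − μ_j)`, realized as the logarithm of the
(positive) maximum of the values `v_{ij} e^{−μ_j}`. -/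
def hMax {n m : ℕ} (v : Fin n → Fin m → ℝ) (μ : Fin m → ℝ) (i : Fin n) : ℝ :=
  Real.log (Finset.univ.sup' Finset.univ_nonempty (valF v μ i))

/-- The nonsmooth objective `F`. -/
def Fobj {n m : ℕ} (B : Fin n → ℝ) (v : Fin n → Fin m → ℝ) (μ : Fin m → ℝ) : ℝ :=
  (∑ j, Real.exp (μ j)) + ∑ i, B i * hMax v μ i

/-- The active index set `𝒥_i(μ) = {j ∈ {0,…,m} : log v_{ij} − μ_j = h_i(μ)}`. -/
def activeSet {n m : ℕ} (v : Fin n → Fin m → ℝ) (μ : Fin m → ℝ) (i : Fin n) :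
    Finset (Fin (m + 1)) :=
  Finset.univ.filter fun j =>
    valF v μ i j = Finset.univ.sup' Finset.univ_nonempty (valF v μ i)

/-- The Euclidean norm on `ℝ^m`. -/
def enorm2 {m : ℕ} (x : Fin m → ℝ) : ℝ :=
  Real.sqrt (∑ j, x j ^ 2)

end


lemma exp_strong (a x y t : ℝ) (hx : a ≤ x) (hy : a ≤ y) (ht0 : 0 ≤ t) (ht1 : t ≤ 1) :
    Real.exp (t * x + (1 - t) * y) ≤
      t * Real.exp x + (1 - t) * Real.exp y - Real.exp a / 2 * (t * (1 - t) * (x - y) ^ 2) := by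
  set c := Real.exp a / 2 with hc
  have hcpos : 0 < c := by positivity
  set f : ℝ → ℝ := fun z => Real.exp z - c * z ^ 2 with hf
  have hd1 : ∀ z : ℝ, HasDerivAt f (Real.exp z - 2 * c * z) z := by
    intro z
    have h1 := (Real.hasDerivAt_exp z).sub (((hasDerivAt_pow 2 z)).const_mul c)
    have : Real.exp z - 2 * c * z = Real.exp z - c * (↑2 * z ^ (2-1)) := by push_cast; ring
    rw [this]; exact h1
  have hderiv : deriv f = fun z => Real.exp z - 2 * c * z := funext fun z => (hd1 z).deriv
  have hconv : ConvexOn ℝ (Set.Ici a) f := by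
    apply convexOn_of_deriv2_nonneg (convex_Ici a)
    · exact fun z _ => (hd1 z).continuousAt.continuousWithinAt
    · exact fun z _ => (hd1 z).differentiableAt.differentiableWithinAt
    · rw [hderiv]
      intro z _
      exact ((Real.hasDerivAt_exp z).sub ((hasDerivAt_id z).const_mul (2*c))).differentiableAt.differentiableWithinAt
    · intro z hz
      rw [interior_Ici] at hz
      have : deriv^[2] f z = Real.exp z - 2 * c := by
        rw [Function.iterate_succ, Function.iterate_one, Function.comp_apply, hderiv]
        have h2 : HasDerivAt (fun z : ℝ => Real.exp z - 2 * c * z) (Real.exp z - 2 * c) z := by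
          exact ((Real.hasDerivAt_exp z).sub ((hasDerivAt_id' z).const_mul (2*c))).congr_deriv (by ring)
        exact h2.deriv
      rw [this]
      have : Real.exp a ≤ Real.exp z := Real.exp_le_exp.2 (le_of_lt hz)
      rw [hc]; linarith
  have key := hconv.2 (Set.mem_Ici.2 hx) (Set.mem_Ici.2 hy) ht0 (show (0:ℝ) ≤ 1 - t by linarith) (by ring)
  simp only [smul_eq_mul, hf] at key
  nlinarith [key, sq_nonneg (x - y)]


lemma extV_nonneg {n m : ℕ} (v : Fin n → Fin m → ℝ) (hv : ∀ i j, 0 ≤ v i j) (i : Fin n)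
    (j : Fin (m + 1)) : 0 ≤ extV v i j := by
  unfold extV
  refine Fin.cases ?_ ?_ j
  · simp
  · intro k; simp [hv i k]

lemma wt_nonneg {n m : ℕ} (v : Fin n → Fin m → ℝ) (hv : ∀ i j, 0 ≤ v i j) (δ : ℝ)
    (μ : Fin m → ℝ) (i : Fin n) (j : Fin (m + 1)) : 0 ≤ wt v δ μ i j := by
  unfold wt
  exact mul_nonneg (Real.rpow_nonneg (extV_nonneg v hv i j) _) (Real.exp_pos _).le

lemma wt_sum_pos {n m : ℕ} (v : Fin n → Fin m → ℝ) (hv : ∀ i j, 0 ≤ v i j) (δ : ℝ)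
    (μ : Fin m → ℝ) (i : Fin n) : 0 < ∑ j, wt v δ μ i j := by
  have h0 : wt v δ μ i 0 = 1 := by
    unfold wt extV extMu
    simp
  calc (0:ℝ) < 1 := one_pos
    _ = wt v δ μ i 0 := h0.symm
    _ ≤ ∑ j, wt v δ μ i j :=
      Finset.single_le_sum (fun j _ => wt_nonneg v hv δ μ i j) (Finset.mem_univ 0)

lemma extMu_comb {m : ℕ} (μ ν : Fin m → ℝ) (t : ℝ) (j : Fin (m+1)) :
    extMu (fun j => t * μ j + (1 - t) * ν j) j = t * extMu μ j + (1 - t) * extMu ν j := by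
  unfold extMu
  refine Fin.cases ?_ ?_ j <;> simp

lemma wt_comb {n m : ℕ} (v : Fin n → Fin m → ℝ) (hv : ∀ i j, 0 ≤ v i j) (δ : ℝ)
    (μ ν : Fin m → ℝ) (t : ℝ) (ht0 : 0 ≤ t) (ht1 : t ≤ 1) (i : Fin n) (j : Fin (m+1)) :
    wt v δ (fun j => t * μ j + (1 - t) * ν j) i j =
      (wt v δ μ i j) ^ t * (wt v δ ν i j) ^ (1 - t) := by
  have hd : 0 ≤ extV v i j ^ (1/δ) := Real.rpow_nonneg (extV_nonneg v hv i j) _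
  unfold wt
  rw [Real.mul_rpow hd (Real.exp_pos _).le, Real.mul_rpow hd (Real.exp_pos _).le]
  rw [← Real.exp_mul, ← Real.exp_mul, extMu_comb]
  have hdd : (extV v i j ^ (1/δ)) ^ t * (extV v i j ^ (1/δ)) ^ (1-t) = extV v i j ^ (1/δ) := by
    rw [← Real.rpow_add_of_nonneg hd ht0 (by linarith)]
    norm_num
  rw [mul_mul_mul_comm, hdd, ← Real.exp_add]
  congr 1
  field_simp
  ring

lemma log_sum_comb {n m : ℕ} (v : Fin n → Fin m → ℝ) (hv : ∀ i j, 0 ≤ v i j) (δ : ℝ)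
    (μ ν : Fin m → ℝ) (t : ℝ) (ht0 : 0 ≤ t) (ht1 : t ≤ 1) (i : Fin n) :
    Real.log (∑ j, wt v δ (fun j => t * μ j + (1 - t) * ν j) i j) ≤
      t * Real.log (∑ j, wt v δ μ i j) + (1 - t) * Real.log (∑ j, wt v δ ν i j) := by
  set S := ∑ j, wt v δ μ i j with hS
  set T := ∑ j, wt v δ ν i j with hT
  have hSpos : 0 < S := wt_sum_pos v hv δ μ i
  have hTpos : 0 < T := wt_sum_pos v hv δ ν i
  have ht1' : (0:ℝ) ≤ 1 - t := by linarith
  have key : ∑ j, wt v δ (fun j => t * μ j + (1 - t) * ν j) i j ≤ S ^ t * T ^ (1 - t) := by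
    have hterm : ∀ j : Fin (m+1),
        wt v δ (fun j => t * μ j + (1 - t) * ν j) i j ≤
          S ^ t * T ^ (1 - t) * (t * (wt v δ μ i j / S) + (1 - t) * (wt v δ ν i j / T)) := by
      intro j
      rw [wt_comb v hv δ μ ν t ht0 ht1 i j]
      have hgm := Real.geom_mean_le_arith_mean2_weighted ht0 ht1'
        (div_nonneg (wt_nonneg v hv δ μ i j) hSpos.le)
        (div_nonneg (wt_nonneg v hv δ ν i j) hTpos.le) (by ring)
      have heq : (wt v δ μ i j / S) ^ t * (wt v δ ν i j / T) ^ (1 - t) =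
          (wt v δ μ i j) ^ t * (wt v δ ν i j) ^ (1 - t) / (S ^ t * T ^ (1 - t)) := by
        rw [Real.div_rpow (wt_nonneg v hv δ μ i j) hSpos.le,
          Real.div_rpow (wt_nonneg v hv δ ν i j) hTpos.le]
        ring
      rw [heq] at hgm
      have hpos : 0 < S ^ t * T ^ (1 - t) :=
        mul_pos (Real.rpow_pos_of_pos hSpos t) (Real.rpow_pos_of_pos hTpos (1 - t))
      calc (wt v δ μ i j) ^ t * (wt v δ ν i j) ^ (1 - t)
          = (wt v δ μ i j) ^ t * (wt v δ ν i j) ^ (1 - t) / (S ^ t * T ^ (1-t)) *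
            (S ^ t * T ^ (1-t)) := by field_simp
        _ ≤ (t * (wt v δ μ i j / S) + (1 - t) * (wt v δ ν i j / T)) * (S ^ t * T ^ (1-t)) :=
            mul_le_mul_of_nonneg_right hgm hpos.le
        _ = S ^ t * T ^ (1 - t) * (t * (wt v δ μ i j / S) + (1 - t) * (wt v δ ν i j / T)) := by
            ring
    calc ∑ j, wt v δ (fun j => t * μ j + (1 - t) * ν j) i j
        ≤ ∑ j, S ^ t * T ^ (1 - t) * (t * (wt v δ μ i j / S) + (1 - t) * (wt v δ ν i j / T)) :=
          Finset.sum_le_sum fun j _ => hterm j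
      _ = S ^ t * T ^ (1 - t) * (t * (S / S) + (1 - t) * (T / T)) := by
          rw [← Finset.mul_sum]
          congr 1
          rw [Finset.sum_add_distrib, ← Finset.mul_sum, ← Finset.mul_sum,
            ← Finset.sum_div, ← Finset.sum_div]
      _ = S ^ t * T ^ (1 - t) := by
          rw [div_self hSpos.ne', div_self hTpos.ne']; ring
  calc Real.log (∑ j, wt v δ (fun j => t * μ j + (1 - t) * ν j) i j)
      ≤ Real.log (S ^ t * T ^ (1 - t)) :=
        Real.log_le_log (wt_sum_pos v hv δ _ i) key
    _ = t * Real.log S + (1 - t) * Real.log T := by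
        rw [Real.log_mul (Real.rpow_pos_of_pos hSpos t).ne' (Real.rpow_pos_of_pos hTpos _).ne',
          Real.log_rpow hSpos, Real.log_rpow hTpos]

/-- `F_δ` is `exp a`-strongly convex on the box `[a,b]^m`. -/
theorem fdelta_strongly_convex_on_box
    (n m : ℕ) (hn : 1 ≤ n) (hm : 1 ≤ m)
    (B : Fin n → ℝ) (hB : ∀ i, 0 < B i)
    (v : Fin n → Fin m → ℝ) (hv : ∀ i j, 0 ≤ v i j)
    (a b : ℝ) (hab : a ≤ b) (δ : ℝ) (hδ : 0 < δ)
    (μ ν : Fin m → ℝ)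
    (hμ : ∀ j, a ≤ μ j ∧ μ j ≤ b) (hν : ∀ j, a ≤ ν j ∧ ν j ≤ b)
    (t : ℝ) (ht0 : 0 ≤ t) (ht1 : t ≤ 1) :
    Fd B v δ (fun j => t * μ j + (1 - t) * ν j) ≤
      t * Fd B v δ μ + (1 - t) * Fd B v δ ν -
        Real.exp a / 2 * t * (1 - t) * enorm2 (fun j => μ j - ν j) ^ 2 := by
  have hsq : enorm2 (fun j => μ j - ν j) ^ 2 = ∑ j, (μ j - ν j) ^ 2 := by
    unfold enorm2
    rw [Real.sq_sqrt (Finset.sum_nonneg fun j _ => sq_nonneg _)]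
  have h1 : ∑ j, Real.exp (t * μ j + (1 - t) * ν j) ≤
      t * ∑ j, Real.exp (μ j) + (1 - t) * ∑ j, Real.exp (ν j)
        - Real.exp a / 2 * (t * (1 - t) * ∑ j, (μ j - ν j) ^ 2) := by
    calc ∑ j, Real.exp (t * μ j + (1 - t) * ν j)
        ≤ ∑ j, (t * Real.exp (μ j) + (1 - t) * Real.exp (ν j)
            - Real.exp a / 2 * (t * (1 - t) * (μ j - ν j) ^ 2)) :=
          Finset.sum_le_sum fun j _ =>
            exp_strong a (μ j) (ν j) t (hμ j).1 (hν j).1 ht0 ht1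
      _ = _ := by
          rw [Finset.sum_sub_distrib, Finset.sum_add_distrib]
          simp only [← Finset.mul_sum]
  have h2 : ∑ i, B i * Real.log (∑ j, wt v δ (fun j => t * μ j + (1 - t) * ν j) i j) ≤
      t * ∑ i, B i * Real.log (∑ j, wt v δ μ i j)
        + (1 - t) * ∑ i, B i * Real.log (∑ j, wt v δ ν i j) := by
    calc ∑ i, B i * Real.log (∑ j, wt v δ (fun j => t * μ j + (1 - t) * ν j) i j)
        ≤ ∑ i, B i * (t * Real.log (∑ j, wt v δ μ i j)
            + (1 - t) * Real.log (∑ j, wt v δ ν i j)) :=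
          Finset.sum_le_sum fun i _ =>
            mul_le_mul_of_nonneg_left (log_sum_comb v hv δ μ ν t ht0 ht1 i) (hB i).le
      _ = _ := by
          rw [Finset.mul_sum, Finset.mul_sum, ← Finset.sum_add_distrib]
          exact Finset.sum_congr rfl fun i _ => by ring
  have h2' := mul_le_mul_of_nonneg_left h2 hδ.le
  unfold Fd
  rw [hsq]
  nlinarith [h1, h2']
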